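/- arXiv:1909.00630 — 2 statements merged into one kernel-verified Lean document; each statement's English description precedes it below -/
import Mathlib

section
/- There exists a constant C > 0, independent of L ≥ 1, such that for every divergence-free u ∈ H^1((-L,L)×(0,1); ℝ²) with u·n = 0 on ∂Ω_L, one has ‖u‖_{L^2(Ω_L)} ≤ C ‖∂_y u‖_{L^2(Ω_L)}. -/
/-!
On every vertical slice `{x} × (0,1)` the field satisfies a one-dimensional Poincaré inequality
in `y` with constant `1`, since each component vanishes somewhere on `[0,1]`: `u²` at `y = 0` by
the wall condition, and `u¹` because it has zero mean. Indeed, by the divergence-free condition and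
Fubini, `∂ₓ ∫₀¹ u¹(x,y) dy = -∫₀¹ ∂_y u²(x,y) dy = u²(x,0) - u²(x,1) = 0`, so the flux through the
slice is the flux through `x = -L`, which is `0`. The slice inequalities do not involve `L`;
integrating them in `x` gives the claim with `C = √2`, the `2` coming from the sup norm on `ℝ × ℝ`.
-/

open MeasureTheory Set

/-- The rectangle `Ω_L = (-L,L) × (0,1)` in `ℝ²`. -/
def rect (L : ℝ) : Set (ℝ × ℝ) := Set.Ioo (-L) L ×ˢ Set.Ioo (0 : ℝ) 1

/-- Horizontal partial derivative. -/
noncomputable def dx (g : ℝ × ℝ → ℝ) (q : ℝ × ℝ) : ℝ := fderiv ℝ g q (1, 0)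

/-- Vertical partial derivative. -/
noncomputable def dy (g : ℝ × ℝ → ℝ) (q : ℝ × ℝ) : ℝ := fderiv ℝ g q (0, 1)

open scoped Interval

theorem Continuous.integrableOn_Ioo {X E : Type*} [TopologicalSpace X] [Preorder X]
    [CompactIccSpace X] [T2Space X] [MeasurableSpace X] [OpensMeasurableSpace X]
    [NormedAddCommGroup E] {μ : Measure X} [IsFiniteMeasureOnCompacts μ] {f : X → E}
    (hf : Continuous f) (a b : X) : IntegrableOn f (Ioo a b) μ :=
  hf.integrableOn_Icc.mono_set Ioo_subset_Icc_self

theorem Continuous.integrableOn_Ioo_prod_Ioo {E : Type*} [NormedAddCommGroup E]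
    {μ : Measure (ℝ × ℝ)} [IsFiniteMeasureOnCompacts μ]
    {f : ℝ × ℝ → E} (hf : Continuous f) (a b c d : ℝ) :
    IntegrableOn f (Ioo a b ×ˢ Ioo c d) μ := by
  refine (hf.integrableOn_Icc (a := (a, c)) (b := (b, d))).mono_set ?_
  rw [Icc_prod_eq]
  exact prod_mono Ioo_subset_Icc_self Ioo_subset_Icc_self

theorem setIntegral_Ioo_eq_sub_of_hasDerivAt {f f' : ℝ → ℝ} (hf : ∀ x, HasDerivAt f (f' x) x)
    (hf' : Continuous f') {a b : ℝ} (hab : a ≤ b) : ∫ x in Ioo a b, f' x = f b - f a := by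
  rw [← integral_Ioc_eq_integral_Ioo, ← intervalIntegral.integral_of_le hab]
  exact intervalIntegral.integral_eq_sub_of_hasDerivAt (fun x _ => hf x)
    (hf'.intervalIntegrable a b)

theorem setIntegral_Ioo_integral_swap {f : ℝ → ℝ → ℝ} (hf : Continuous (Function.uncurry f))
    (a b c d : ℝ) :
    ∫ x in Ioo a b, ∫ y in Ioo c d, f x y = ∫ y in Ioo c d, ∫ x in Ioo a b, f x y := by
  refine integral_integral_swap ?_
  rw [Measure.prod_restrict, ← Measure.volume_eq_prod]
  exact hf.integrableOn_Ioo_prod_Ioo a b c d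

theorem setIntegral_Ioo_prod_Ioo_mono {F G : ℝ × ℝ → ℝ} (hF : Continuous F) (hG : Continuous G)
    {a b c d : ℝ} (h : ∀ x ∈ Ioo a b, ∫ y in Ioo c d, F (x, y) ≤ ∫ y in Ioo c d, G (x, y)) :
    ∫ p in Ioo a b ×ˢ Ioo c d, F p ≤ ∫ p in Ioo a b ×ˢ Ioo c d, G p := by
  have hF' := hF.integrableOn_Ioo_prod_Ioo (μ := volume.prod volume) a b c d
  have hG' := hG.integrableOn_Ioo_prod_Ioo (μ := volume.prod volume) a b c d
  rw [Measure.volume_eq_prod, setIntegral_prod F hF', setIntegral_prod G hG']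
  rw [IntegrableOn, ← Measure.prod_restrict] at hF' hG'
  exact setIntegral_mono_on hF'.integral_prod_left hG'.integral_prod_left measurableSet_Ioo h

instance : IsProbabilityMeasure (volume.restrict (Ioo (0 : ℝ) 1)) := ⟨by simp⟩

theorem sq_integral_le_integral_sq {α : Type*} [MeasurableSpace α] {μ : Measure α}
    [IsProbabilityMeasure μ] {g : α → ℝ} (hg : Integrable g μ)
    (hg2 : Integrable (fun x => g x ^ 2) μ) : (∫ x, g x ∂μ) ^ 2 ≤ ∫ x, g x ^ 2 ∂μ :=
  even_two.convexOn_pow.map_integral_le (continuous_pow 2).continuousOn isClosed_univ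
    (by simp) hg hg2

theorem exists_mem_Icc_eq_zero_of_setIntegral_eq_zero {f : ℝ → ℝ} (hf : Continuous f)
    (h : ∫ y in Ioo (0 : ℝ) 1, f y = 0) : ∃ z ∈ Icc (0 : ℝ) 1, f z = 0 := by
  obtain ⟨z, hz, hfz⟩ := exists_eq_setAverage (isConnected_Ioo zero_lt_one) hf.continuousOn
    (hf.integrableOn_Ioo (μ := volume) 0 1) (by simp) (by simp)
  exact ⟨z, Ioo_subset_Icc_self hz, by rwa [average_eq_integral, h] at hfz⟩

section UnitInterval

variable {f f' : ℝ → ℝ}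

theorem abs_sub_le_setIntegral_abs_deriv (hf : ∀ t, HasDerivAt f (f' t) t) (hf' : Continuous f')
    {a b y z : ℝ} (hy : y ∈ Icc a b) (hz : z ∈ Icc a b) :
    |f y - f z| ≤ ∫ t in Ioo a b, |f' t| := by
  rw [← intervalIntegral.integral_eq_sub_of_hasDerivAt (fun t _ => hf t)
    (hf'.intervalIntegrable z y), ← integral_Icc_eq_integral_Ioo]
  calc |∫ t in z..y, f' t| ≤ ∫ t in Ι z y, |f' t| := by
        simpa only [Real.norm_eq_abs] using
          intervalIntegral.norm_integral_le_integral_norm_uIoc (f := f') (μ := volume)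
    _ ≤ ∫ t in Icc a b, |f' t| := by
        refine setIntegral_mono_set hf'.abs.integrableOn_Icc
          (.of_forall fun t => abs_nonneg _) ?_
        exact (uIoc_subset_uIcc.trans (uIcc_subset_Icc hz hy)).eventuallyLE

theorem setIntegral_sq_le_setIntegral_deriv_sq (hf : ∀ t, HasDerivAt f (f' t) t)
    (hf' : Continuous f') {z : ℝ} (hz : z ∈ Icc (0 : ℝ) 1) (hfz : f z = 0) :
    ∫ y in Ioo (0 : ℝ) 1, f y ^ 2 ≤ ∫ y in Ioo (0 : ℝ) 1, f' y ^ 2 := by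
  have hfc : Continuous f := continuous_iff_continuousAt.2 fun t => (hf t).continuousAt
  have hpt : ∀ y ∈ Ioo (0 : ℝ) 1, f y ^ 2 ≤ ∫ t in Ioo (0 : ℝ) 1, f' t ^ 2 := fun y hy =>
    calc f y ^ 2 = |f y - f z| ^ 2 := by rw [hfz, sub_zero, sq_abs]
      _ ≤ (∫ t in Ioo (0 : ℝ) 1, |f' t|) ^ 2 := by
        gcongr
        exact abs_sub_le_setIntegral_abs_deriv hf hf' (Ioo_subset_Icc_self hy) hz
      _ ≤ ∫ t in Ioo (0 : ℝ) 1, |f' t| ^ 2 :=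
        sq_integral_le_integral_sq (hf'.abs.integrableOn_Ioo 0 1)
          ((hf'.abs.pow 2).integrableOn_Ioo 0 1)
      _ = ∫ t in Ioo (0 : ℝ) 1, f' t ^ 2 := by simp only [sq_abs]
  calc ∫ y in Ioo (0 : ℝ) 1, f y ^ 2 ≤ ∫ _ in Ioo (0 : ℝ) 1, ∫ t in Ioo (0 : ℝ) 1, f' t ^ 2 :=
        setIntegral_mono_on ((hfc.pow 2).integrableOn_Ioo 0 1) (integrableOn_const (by simp))
          measurableSet_Ioo hpt
    _ = ∫ t in Ioo (0 : ℝ) 1, f' t ^ 2 := by simp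

end UnitInterval

theorem Prod.norm_sq_le_fst_sq_add_snd_sq (v : ℝ × ℝ) : ‖v‖ ^ 2 ≤ v.1 ^ 2 + v.2 ^ 2 := by
  rw [Prod.norm_def, Real.norm_eq_abs, Real.norm_eq_abs]
  rcases max_cases |v.1| |v.2| with ⟨h, _⟩ | ⟨h, _⟩ <;> rw [h, sq_abs] <;>
    nlinarith [sq_nonneg v.1, sq_nonneg v.2]

theorem Prod.fst_sq_add_snd_sq_le_two_mul_norm_sq (v : ℝ × ℝ) :
    v.1 ^ 2 + v.2 ^ 2 ≤ 2 * ‖v‖ ^ 2 := by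
  have h₁ : v.1 ^ 2 ≤ ‖v‖ ^ 2 := by
    rw [← sq_abs, ← Real.norm_eq_abs]; gcongr; exact norm_fst_le v
  have h₂ : v.2 ^ 2 ≤ ‖v‖ ^ 2 := by
    rw [← sq_abs, ← Real.norm_eq_abs]; gcongr; exact norm_snd_le v
  linarith

theorem setIntegral_norm_sq_le_two_mul_setIntegral_deriv_sq {f f' : ℝ → ℝ × ℝ}
    (hf : ∀ t, HasDerivAt f (f' t) t) (hf' : Continuous f')
    (h₁ : ∃ z ∈ Icc (0 : ℝ) 1, (f z).1 = 0) (h₂ : ∃ z ∈ Icc (0 : ℝ) 1, (f z).2 = 0) :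
    ∫ t in Ioo (0 : ℝ) 1, ‖f t‖ ^ 2 ≤ 2 * ∫ t in Ioo (0 : ℝ) 1, ‖f' t‖ ^ 2 := by
  have hfc : Continuous f := continuous_iff_continuousAt.2 fun t => (hf t).continuousAt
  have hint {g : ℝ → ℝ} (hg : Continuous g) : Integrable g (volume.restrict (Ioo (0 : ℝ) 1)) :=
    hg.integrableOn_Ioo 0 1
  obtain ⟨z₁, hz₁, hfz₁⟩ := h₁
  obtain ⟨z₂, hz₂, hfz₂⟩ := h₂
  calc ∫ t in Ioo (0 : ℝ) 1, ‖f t‖ ^ 2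
      ≤ ∫ t in Ioo (0 : ℝ) 1, ((f t).1 ^ 2 + (f t).2 ^ 2) :=
        integral_mono (hint (hfc.norm.pow 2)) (hint ((hfc.fst.pow 2).add (hfc.snd.pow 2)))
          fun t => (f t).norm_sq_le_fst_sq_add_snd_sq
    _ = (∫ t in Ioo (0 : ℝ) 1, (f t).1 ^ 2) + ∫ t in Ioo (0 : ℝ) 1, (f t).2 ^ 2 :=
        integral_add (hint (hfc.fst.pow 2)) (hint (hfc.snd.pow 2))
    _ ≤ (∫ t in Ioo (0 : ℝ) 1, (f' t).1 ^ 2) + ∫ t in Ioo (0 : ℝ) 1, (f' t).2 ^ 2 :=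
        add_le_add
          (setIntegral_sq_le_setIntegral_deriv_sq (fun t => (hf t).fst) hf'.fst hz₁ hfz₁)
          (setIntegral_sq_le_setIntegral_deriv_sq (fun t => (hf t).snd) hf'.snd hz₂ hfz₂)
    _ = ∫ t in Ioo (0 : ℝ) 1, ((f' t).1 ^ 2 + (f' t).2 ^ 2) :=
        (integral_add (hint (hf'.fst.pow 2)) (hint (hf'.snd.pow 2))).symm
    _ ≤ ∫ t in Ioo (0 : ℝ) 1, 2 * ‖f' t‖ ^ 2 :=
        integral_mono (hint ((hf'.fst.pow 2).add (hf'.snd.pow 2)))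
          (hint (continuous_const.mul (hf'.norm.pow 2)))
          fun t => (f' t).fst_sq_add_snd_sq_le_two_mul_norm_sq
    _ = 2 * ∫ t in Ioo (0 : ℝ) 1, ‖f' t‖ ^ 2 := integral_const_mul _ _

section VectorField

variable {u : ℝ × ℝ → ℝ × ℝ}

theorem ContDiff.hasDerivAt_vertical_slice (hu : ContDiff ℝ 1 u) (x y : ℝ) :
    HasDerivAt (fun t => u (x, t)) (fderiv ℝ u (x, y) (0, 1)) y :=
  (hu.differentiable one_ne_zero (x, y)).hasFDerivAt.comp_hasDerivAt y
    ((hasDerivAt_const y x).prodMk (hasDerivAt_id y))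

theorem ContDiff.hasDerivAt_horizontal_slice (hu : ContDiff ℝ 1 u) (x y : ℝ) :
    HasDerivAt (fun s => u (s, y)) (fderiv ℝ u (x, y) (1, 0)) x :=
  (hu.differentiable one_ne_zero (x, y)).hasFDerivAt.comp_hasDerivAt x
    ((hasDerivAt_id x).prodMk (hasDerivAt_const x y))

theorem ContDiff.continuous_fderiv_apply_const (hu : ContDiff ℝ 1 u) (v : ℝ × ℝ) :
    Continuous fun p => fderiv ℝ u p v :=
  (hu.continuous_fderiv one_ne_zero).clm_apply continuous_const

theorem dx_fst_add_dy_snd (hu : Differentiable ℝ u) (p : ℝ × ℝ) :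
    dx (fun q => (u q).1) p + dy (fun q => (u q).2) p =
      (fderiv ℝ u p (1, 0)).1 + (fderiv ℝ u p (0, 1)).2 := by
  simp only [dx, dy, fderiv.fst (hu p), fderiv.snd (hu p)]
  rfl

theorem setIntegral_fst_vertical_slice_eq (hu : ContDiff ℝ 1 u)
    (hdiv : ∀ p, dx (fun q => (u q).1) p + dy (fun q => (u q).2) p = 0) {a b : ℝ} (hab : a ≤ b)
    (hwall : ∀ x ∈ Icc a b, (u (x, 0)).2 = 0 ∧ (u (x, 1)).2 = 0) :
    ∫ y in Ioo (0 : ℝ) 1, (u (b, y)).1 = ∫ y in Ioo (0 : ℝ) 1, (u (a, y)).1 := by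
  set D : ℝ × ℝ → ℝ := fun p => (fderiv ℝ u p (1, 0)).1
  have hD : Continuous D := (hu.continuous_fderiv_apply_const (1, 0)).fst
  have horizontal (y : ℝ) : (u (b, y)).1 - (u (a, y)).1 = ∫ s in Ioo a b, D (s, y) :=
    (setIntegral_Ioo_eq_sub_of_hasDerivAt (fun s => (hu.hasDerivAt_horizontal_slice s y).fst)
      (hD.comp (by fun_prop)) hab).symm
  have vertical : ∀ s ∈ Ioo a b, ∫ y in Ioo (0 : ℝ) 1, D (s, y) = 0 := by
    intro s hs
    have hD_eq : (fun y => D (s, y)) = fun y => -(fderiv ℝ u (s, y) (0, 1)).2 := by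
      funext y
      linarith [dx_fst_add_dy_snd (hu.differentiable one_ne_zero) (s, y), hdiv (s, y)]
    obtain ⟨hbottom, htop⟩ := hwall s (Ioo_subset_Icc_self hs)
    rw [hD_eq, integral_neg, setIntegral_Ioo_eq_sub_of_hasDerivAt
      (fun y => (hu.hasDerivAt_vertical_slice s y).snd)
      ((hu.continuous_fderiv_apply_const (0, 1)).snd.comp (by fun_prop)) zero_le_one,
      hbottom, htop, sub_zero, neg_zero]
  have hslice (x : ℝ) : IntegrableOn (fun y => (u (x, y)).1) (Ioo (0 : ℝ) 1) :=
    (hu.continuous.fst.comp (by fun_prop)).integrableOn_Ioo 0 1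
  rw [← sub_eq_zero, ← integral_sub (hslice b) (hslice a)]
  simp only [horizontal]
  rw [setIntegral_Ioo_integral_swap (f := fun y s => D (s, y)) (hD.comp continuous_swap),
    setIntegral_congr_fun measurableSet_Ioo vertical, integral_zero]

end VectorField

/-- Uniform-in-`L` Poincaré inequality: there is `C > 0`, independent of `L ≥ 1`, with
`‖u‖_{L²(Ω_L)} ≤ C ‖∂_y u‖_{L²(Ω_L)}` for all divergence-free `u ∈ H¹(Ω_L;ℝ²)` tangent to
the boundary of `Ω_L = (-L,L)×(0,1)`. -/
theorem uniform_poincare :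
    ∃ C > 0, ∀ (L : ℝ), 1 ≤ L → ∀ (u : ℝ × ℝ → ℝ × ℝ),
      ContDiff ℝ 1 u →
      (∀ p : ℝ × ℝ, dx (fun q => (u q).1) p + dy (fun q => (u q).2) p = 0) →
      (∀ y ∈ Set.Icc (0 : ℝ) 1, (u (-L, y)).1 = 0 ∧ (u (L, y)).1 = 0) →
      (∀ x ∈ Set.Icc (-L) L, (u (x, 0)).2 = 0 ∧ (u (x, 1)).2 = 0) →
      (∫ p in rect L, ‖u p‖ ^ 2) ^ ((1 : ℝ) / 2) ≤
        C * (∫ p in rect L, ‖fderiv ℝ u p (0, 1)‖ ^ 2) ^ ((1 : ℝ) / 2) := by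
  refine ⟨√2, by positivity, fun L _ u hu hdiv hside hwall => ?_⟩
  have hv : Continuous fun p => fderiv ℝ u p (0, 1) := hu.continuous_fderiv_apply_const (0, 1)
  have hslice : ∀ x ∈ Ioo (-L) L, ∫ y in Ioo (0 : ℝ) 1, ‖u (x, y)‖ ^ 2 ≤
      ∫ y in Ioo (0 : ℝ) 1, 2 * ‖fderiv ℝ u (x, y) (0, 1)‖ ^ 2 := by
    intro x hx
    have hx' : x ∈ Icc (-L) L := Ioo_subset_Icc_self hx
    have hflux : ∫ y in Ioo (0 : ℝ) 1, (u (x, y)).1 = 0 := by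
      rw [setIntegral_fst_vertical_slice_eq hu hdiv hx'.1
          fun s hs => hwall s ⟨hs.1, hs.2.trans hx'.2⟩,
        setIntegral_congr_fun measurableSet_Ioo fun y hy => (hside y (Ioo_subset_Icc_self hy)).1,
        integral_zero]
    rw [integral_const_mul]
    exact setIntegral_norm_sq_le_two_mul_setIntegral_deriv_sq (hu.hasDerivAt_vertical_slice x)
      (hv.comp (by fun_prop))
      (exists_mem_Icc_eq_zero_of_setIntegral_eq_zero (hu.continuous.fst.comp (by fun_prop)) hflux)
      ⟨0, left_mem_Icc.2 zero_le_one, (hwall x hx').1⟩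
  have hL2 : ∫ p in rect L, ‖u p‖ ^ 2 ≤ 2 * ∫ p in rect L, ‖fderiv ℝ u p (0, 1)‖ ^ 2 := by
    rw [← integral_const_mul]
    exact setIntegral_Ioo_prod_Ioo_mono (by fun_prop) (by fun_prop) hslice
  rw [← Real.sqrt_eq_rpow, ← Real.sqrt_eq_rpow, ← Real.sqrt_mul zero_le_two]
  exact Real.sqrt_le_sqrt hL2
end

section
/- Let Ω = ℝ×(0,1) and let u ∈ H^1(Ω;ℝ²) be divergence free with u·n = 0 on ∂Ω (that is, u²(x,0)=u²(x,1)=0). Then there is a constant C > 0 (independent of u) with ‖u‖_{L^2(Ω)} ≤ C ‖∂_y u‖_{L^2(Ω)}. -/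
/-!
The vertical flux `x ↦ ∫₀¹ u¹(x, y) dy` does not depend on `x`: by Fubini, its increment between
two abscissae is the integral of `∂ₓu¹ = -∂ᵧu²` over a rectangle, and `∫₀¹ ∂ᵧu² dy = 0` because
`u²` vanishes on both boundary lines. A constant whose square is bounded by the integrable function
`x ↦ ∫₀¹ ‖u(x, y)‖² dy` on the whole line must be zero, so on every vertical segment `u¹` has mean
zero, hence a zero, while `u²` vanishes at `y = 0`. The one-dimensional Poincaré inequality
`∫₀¹ f² ≤ ∫₀¹ f'²` for functions with a zero then applies to both components; integrating it over
`x` gives `‖u‖² ≤ 2 ‖∂ᵧu‖²`, the factor `2` coming from the sup norm on `ℝ × ℝ`.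
-/

open MeasureTheory Set

/-- The strip `Ω = ℝ × (0,1)` in `ℝ²`. -/
def strip : Set (ℝ × ℝ) := Set.univ ×ˢ Set.Ioo (0 : ℝ) 1

theorem sq_setIntegral_le_measureReal_mul {α : Type*} [MeasurableSpace α] {μ : Measure α}
    {s : Set α} {g : α → ℝ} (hs : μ s ≠ ⊤) (hg : IntegrableOn g s μ)
    (hg2 : IntegrableOn (fun x => g x ^ 2) s μ) :
    (∫ x in s, g x ∂μ) ^ 2 ≤ μ.real s * ∫ x in s, g x ^ 2 ∂μ := by
  rcases eq_or_ne (μ s) 0 with hs0 | hs0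
  · simp [Measure.restrict_eq_zero.2 hs0]
  have hm : μ.real s ≠ 0 := (ENNReal.toReal_pos hs0 hs).ne'
  have jensen : ((μ.real s)⁻¹ * ∫ x in s, g x ∂μ) ^ 2 ≤ (μ.real s)⁻¹ * ∫ x in s, g x ^ 2 ∂μ := by
    simpa [setAverage_eq] using (Even.convexOn_pow (𝕜 := ℝ) even_two).map_set_average_le
      (continuous_pow 2).continuousOn isClosed_univ hs0 hs (by simp) hg hg2
  calc (∫ x in s, g x ∂μ) ^ 2 = μ.real s ^ 2 * ((μ.real s)⁻¹ * ∫ x in s, g x ∂μ) ^ 2 := by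
        field_simp
    _ ≤ μ.real s ^ 2 * ((μ.real s)⁻¹ * ∫ x in s, g x ^ 2 ∂μ) := by gcongr
    _ = μ.real s * ∫ x in s, g x ^ 2 ∂μ := by field_simp

theorem sq_intervalIntegral_le_mul {g : ℝ → ℝ} {a b : ℝ} (hab : a ≤ b)
    (hg : IntervalIntegrable g volume a b)
    (hg2 : IntervalIntegrable (fun x => g x ^ 2) volume a b) :
    (∫ x in a..b, g x) ^ 2 ≤ (b - a) * ∫ x in a..b, g x ^ 2 := by
  simpa [intervalIntegral.integral_of_le hab, hab] using
    sq_setIntegral_le_measureReal_mul measure_Ioc_lt_top.ne hg.1 hg2.1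

theorem eq_zero_of_sq_le_of_integrable {α : Type*} [MeasurableSpace α] {μ : Measure α}
    (hμ : μ univ = ⊤) {c : ℝ} {F : α → ℝ} (hF : Integrable F μ) (h : ∀ x, c ^ 2 ≤ F x) :
    c = 0 := by
  have hc : Integrable (fun _ => c ^ 2) μ :=
    hF.mono' aestronglyMeasurable_const (.of_forall fun x => by
      rw [Real.norm_eq_abs, abs_of_nonneg (sq_nonneg c)]; exact h x)
  rcases integrable_const_iff.1 hc with hc | hfin
  · exact pow_eq_zero_iff two_ne_zero |>.1 hc
  · exact absurd hμ (measure_ne_top μ univ)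

section SupNorm

variable {α : Type*} [MeasurableSpace α] {μ : Measure α} {f : α → ℝ × ℝ}

theorem sq_norm_le_fst_sq_add_snd_sq (w : ℝ × ℝ) : ‖w‖ ^ 2 ≤ w.1 ^ 2 + w.2 ^ 2 := by
  rw [Prod.norm_def, Real.norm_eq_abs, Real.norm_eq_abs]
  rcases max_choice |w.1| |w.2| with h | h <;> rw [h, sq_abs] <;> nlinarith [sq_abs w.1, sq_abs w.2]

theorem fst_sq_le_sq_norm (w : ℝ × ℝ) : w.1 ^ 2 ≤ ‖w‖ ^ 2 := by
  simpa [Real.norm_eq_abs, sq_abs] using pow_le_pow_left₀ (norm_nonneg _) (norm_fst_le w) 2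

theorem snd_sq_le_sq_norm (w : ℝ × ℝ) : w.2 ^ 2 ≤ ‖w‖ ^ 2 := by
  simpa [Real.norm_eq_abs, sq_abs] using pow_le_pow_left₀ (norm_nonneg _) (norm_snd_le w) 2

theorem fst_sq_add_snd_sq_le_two_mul_sq_norm (w : ℝ × ℝ) : w.1 ^ 2 + w.2 ^ 2 ≤ 2 * ‖w‖ ^ 2 := by
  linarith [fst_sq_le_sq_norm w, snd_sq_le_sq_norm w]

theorem MeasureTheory.Integrable.fst_sq_add_snd_sq (hf : AEStronglyMeasurable f μ)
    (h : Integrable (fun a => ‖f a‖ ^ 2) μ) : Integrable (fun a => (f a).1 ^ 2 + (f a).2 ^ 2) μ :=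
  (h.const_mul 2).mono' ((hf.fst.pow 2).add (hf.snd.pow 2)) (.of_forall fun a => by
    rw [Real.norm_eq_abs, abs_of_nonneg (by positivity)]
    exact fst_sq_add_snd_sq_le_two_mul_sq_norm (f a))

theorem integral_sq_norm_le_integral_fst_sq_add_snd_sq (hf : AEStronglyMeasurable f μ)
    (h : Integrable (fun a => ‖f a‖ ^ 2) μ) :
    ∫ a, ‖f a‖ ^ 2 ∂μ ≤ ∫ a, ((f a).1 ^ 2 + (f a).2 ^ 2) ∂μ :=
  integral_mono h (h.fst_sq_add_snd_sq hf) fun a => sq_norm_le_fst_sq_add_snd_sq (f a)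

theorem integral_fst_sq_add_snd_sq_le_two_mul (hf : AEStronglyMeasurable f μ)
    (h : Integrable (fun a => ‖f a‖ ^ 2) μ) :
    ∫ a, ((f a).1 ^ 2 + (f a).2 ^ 2) ∂μ ≤ 2 * ∫ a, ‖f a‖ ^ 2 ∂μ := by
  rw [← integral_const_mul]
  exact integral_mono (h.fst_sq_add_snd_sq hf) (h.const_mul 2)
    fun a => fst_sq_add_snd_sq_le_two_mul_sq_norm (f a)

end SupNorm

theorem exists_eq_zero_of_intervalIntegral_eq_zero {f : ℝ → ℝ} {a b : ℝ} (hab : a < b)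
    (hf : ContinuousOn f (Icc a b)) (h : ∫ y in a..b, f y = 0) : ∃ z ∈ Icc a b, f z = 0 := by
  have hfi : IntegrableOn f (Ioc a b) := hf.integrableOn_Icc.mono_set Ioc_subset_Icc_self
  have hμ : volume (Ioc a b) ≠ 0 := by simp [hab]
  have havg : ⨍ y in Ioc a b, f y = 0 := by
    rw [setAverage_eq, ← intervalIntegral.integral_of_le hab.le, h, smul_zero]
  obtain ⟨y₁, hy₁, hfy₁⟩ := exists_le_setAverage hμ measure_Ioc_lt_top.ne hfi
  obtain ⟨y₂, hy₂, hfy₂⟩ := exists_setAverage_le hμ measure_Ioc_lt_top.ne hfi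
  rw [havg] at hfy₁ hfy₂
  exact isPreconnected_Icc.intermediate_value (Ioc_subset_Icc_self hy₁)
    (Ioc_subset_Icc_self hy₂) hf ⟨hfy₁, hfy₂⟩

theorem intervalIntegral_sq_le_of_eq_zero {f f' : ℝ → ℝ} {a b z : ℝ} (hab : a ≤ b)
    (hf : ∀ y ∈ Icc a b, HasDerivAt f (f' y) y) (hf' : ContinuousOn f' (Icc a b))
    (hz : z ∈ Icc a b) (hfz : f z = 0) :
    ∫ y in a..b, f y ^ 2 ≤ (b - a) ^ 2 * ∫ y in a..b, f' y ^ 2 := by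
  have hfc : ContinuousOn f (Icc a b) := fun y hy => (hf y hy).continuousAt.continuousWithinAt
  have hint : ∀ {g : ℝ → ℝ}, ContinuousOn g (Icc a b) → IntervalIntegrable g volume a b :=
    fun hg => (hg.mono (uIcc_of_le hab).subset).intervalIntegrable
  set M := ∫ t in a..b, |f' t|
  have hbound : ∀ y ∈ Icc a b, |f y| ≤ M := by
    intro y hy
    have hsub : uIcc z y ⊆ Icc a b := uIcc_subset_Icc hz hy
    have ftc : ∫ t in z..y, f' t = f y := by
      rw [intervalIntegral.integral_eq_sub_of_hasDerivAt (fun t ht => hf t (hsub ht))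
        ((hf'.mono hsub).intervalIntegrable), hfz, sub_zero]
    rw [← ftc, ← Real.norm_eq_abs]
    refine intervalIntegral.norm_integral_le_integral_norm_uIoc.trans ?_
    refine (setIntegral_mono_set (hint hf'.abs).1 (.of_forall fun t => abs_nonneg _)
      (.of_forall (Ioc_subset_Ioc (le_inf hz.1 hy.1) (sup_le hz.2 hy.2)))).trans_eq ?_
    exact (intervalIntegral.integral_of_le hab).symm
  calc ∫ y in a..b, f y ^ 2 ≤ ∫ _ in a..b, M ^ 2 :=
        intervalIntegral.integral_mono_on hab (hint (hfc.pow 2)) intervalIntegrable_const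
          fun y hy => sq_le_sq' (abs_le.1 (hbound y hy)).1 (abs_le.1 (hbound y hy)).2
    _ = (b - a) * M ^ 2 := by simp
    _ ≤ (b - a) * ((b - a) * ∫ t in a..b, |f' t| ^ 2) := by
        gcongr
        exact sq_intervalIntegral_le_mul hab (hint hf'.abs) (hint (hf'.abs.pow 2))
    _ = (b - a) ^ 2 * ∫ t in a..b, f' t ^ 2 := by simp only [sq_abs]; ring

section PartialDerivatives

variable {g : ℝ × ℝ → ℝ}

theorem DifferentiableAt.hasDerivAt_dx {x y : ℝ} (hg : DifferentiableAt ℝ g (x, y)) :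
    HasDerivAt (fun t => g (t, y)) (dx g (x, y)) x :=
  hg.hasFDerivAt.comp_hasDerivAt x ((hasDerivAt_id x).prodMk (hasDerivAt_const x y))

theorem DifferentiableAt.hasDerivAt_dy {x y : ℝ} (hg : DifferentiableAt ℝ g (x, y)) :
    HasDerivAt (fun t => g (x, t)) (dy g (x, y)) y :=
  hg.hasFDerivAt.comp_hasDerivAt y ((hasDerivAt_const y x).prodMk (hasDerivAt_id y))

theorem ContDiff.continuous_dx (hg : ContDiff ℝ 1 g) : Continuous (dx g) :=
  (hg.continuous_fderiv one_ne_zero).clm_apply continuous_const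

theorem ContDiff.continuous_dy (hg : ContDiff ℝ 1 g) : Continuous (dy g) :=
  (hg.continuous_fderiv one_ne_zero).clm_apply continuous_const

theorem dy_fst {u : ℝ × ℝ → ℝ × ℝ} {p : ℝ × ℝ} (hu : DifferentiableAt ℝ u p) :
    dy (fun q => (u q).1) p = (fderiv ℝ u p (0, 1)).1 := by
  rw [dy, hu.hasFDerivAt.fst.fderiv]; rfl

theorem dy_snd {u : ℝ × ℝ → ℝ × ℝ} {p : ℝ × ℝ} (hu : DifferentiableAt ℝ u p) :
    dy (fun q => (u q).2) p = (fderiv ℝ u p (0, 1)).2 := by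
  rw [dy, hu.hasFDerivAt.snd.fderiv]; rfl

end PartialDerivatives

theorem intervalIntegral_dy_eq_sub {g : ℝ × ℝ → ℝ} (hg : ContDiff ℝ 1 g) (x c d : ℝ) :
    ∫ y in c..d, dy g (x, y) = g (x, d) - g (x, c) :=
  intervalIntegral.integral_eq_sub_of_hasDerivAt
    (fun _ _ => (hg.differentiable one_ne_zero _).hasDerivAt_dy)
    ((hg.continuous_dy.comp (Continuous.prodMk_right x)).intervalIntegrable _ _)

theorem intervalIntegral_dx_eq_sub {g : ℝ × ℝ → ℝ} (hg : ContDiff ℝ 1 g) (y a b : ℝ) :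
    ∫ x in a..b, dx g (x, y) = g (b, y) - g (a, y) :=
  intervalIntegral.integral_eq_sub_of_hasDerivAt
    (fun _ _ => (hg.differentiable one_ne_zero _).hasDerivAt_dx)
    ((hg.continuous_dx.comp (Continuous.prodMk_left y)).intervalIntegrable _ _)

theorem intervalIntegral_eq_of_dx_add_dy_eq_zero {g h : ℝ × ℝ → ℝ} {c d : ℝ}
    (hg : ContDiff ℝ 1 g) (hh : ContDiff ℝ 1 h) (hdiv : ∀ p, dx g p + dy h p = 0)
    (hc : ∀ x, h (x, c) = 0) (hd : ∀ x, h (x, d) = 0) (a b : ℝ) :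
    ∫ y in c..d, g (a, y) = ∫ y in c..d, g (b, y) := by
  have hswap : ∫ y in c..d, ∫ x in a..b, dx g (x, y) = ∫ x in a..b, ∫ y in c..d, dx g (x, y) :=
    intervalIntegral_intervalIntegral_swap (F := fun y x => dx g (x, y)) <|
      ((hg.continuous_dx.comp continuous_swap).continuousOn.integrableOn_compact
        (isCompact_uIcc.prod isCompact_uIcc)).mono_set
        (prod_mono uIoc_subset_uIcc uIoc_subset_uIcc)
  have hdx_slice : ∀ x, ∫ y in c..d, dx g (x, y) = 0 := fun x => by
    simp_rw [eq_neg_of_add_eq_zero_left (hdiv _), intervalIntegral.integral_neg,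
      intervalIntegral_dy_eq_sub hh, hc, hd, sub_zero, neg_zero]
  have hslice : ∀ x, IntervalIntegrable (fun y => g (x, y)) volume c d := fun x =>
    (hg.continuous.comp (Continuous.prodMk_right x)).intervalIntegrable _ _
  rw [eq_comm, ← sub_eq_zero, ← intervalIntegral.integral_sub (hslice b) (hslice a)]
  simp_rw [← intervalIntegral_dx_eq_sub hg, hswap, hdx_slice, intervalIntegral.integral_zero]

theorem intervalIntegral_sq_le_dy_of_eq_zero {g : ℝ × ℝ → ℝ} (hg : ContDiff ℝ 1 g)
    {x a b z : ℝ} (hab : a ≤ b) (hz : z ∈ Icc a b) (hgz : g (x, z) = 0) :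
    ∫ y in a..b, g (x, y) ^ 2 ≤ (b - a) ^ 2 * ∫ y in a..b, dy g (x, y) ^ 2 :=
  intervalIntegral_sq_le_of_eq_zero hab
    (fun _ _ => (hg.differentiable one_ne_zero _).hasDerivAt_dy)
    (hg.continuous_dy.comp (Continuous.prodMk_right x)).continuousOn hz hgz

theorem intervalIntegral_sq_add_sq_le_dy {g h : ℝ × ℝ → ℝ} (hg : ContDiff ℝ 1 g)
    (hh : ContDiff ℝ 1 h) {x : ℝ} (hg0 : ∫ y in (0 : ℝ)..1, g (x, y) = 0) (hh0 : h (x, 0) = 0) :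
    ∫ y in (0 : ℝ)..1, (g (x, y) ^ 2 + h (x, y) ^ 2) ≤
      ∫ y in (0 : ℝ)..1, (dy g (x, y) ^ 2 + dy h (x, y) ^ 2) := by
  obtain ⟨z, hz, hgz⟩ := exists_eq_zero_of_intervalIntegral_eq_zero zero_lt_one
    (hg.continuous.comp (Continuous.prodMk_right x)).continuousOn hg0
  have hint : ∀ {k : ℝ × ℝ → ℝ}, Continuous k →
      IntervalIntegrable (fun y => k (x, y) ^ 2) volume 0 1 :=
    fun hk => ((hk.comp (Continuous.prodMk_right x)).pow 2).intervalIntegrable _ _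
  rw [intervalIntegral.integral_add (hint hg.continuous) (hint hh.continuous),
    intervalIntegral.integral_add (hint hg.continuous_dy) (hint hh.continuous_dy)]
  gcongr
  · simpa using intervalIntegral_sq_le_dy_of_eq_zero hg zero_le_one hz hgz
  · simpa using intervalIntegral_sq_le_dy_of_eq_zero hh zero_le_one (by simp) hh0

theorem volume_restrict_strip :
    volume.restrict strip = volume.prod (volume.restrict (Ioo (0 : ℝ) 1)) := by
  rw [strip, Measure.volume_eq_prod, ← Measure.prod_restrict, Measure.restrict_univ]

theorem integrable_intervalIntegral_of_integrableOn_strip {G : ℝ × ℝ → ℝ}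
    (hG : IntegrableOn G strip) : Integrable fun x => ∫ y in (0 : ℝ)..1, G (x, y) := by
  simp_rw [intervalIntegral.integral_of_le zero_le_one, integral_Ioc_eq_integral_Ioo]
  rw [IntegrableOn, volume_restrict_strip] at hG
  exact hG.integral_prod_left

theorem setIntegral_strip {G : ℝ × ℝ → ℝ} (hG : IntegrableOn G strip) :
    ∫ p in strip, G p = ∫ x, ∫ y in (0 : ℝ)..1, G (x, y) := by
  simp_rw [intervalIntegral.integral_of_le zero_le_one, integral_Ioc_eq_integral_Ioo]
  rw [IntegrableOn, volume_restrict_strip] at hG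
  rw [volume_restrict_strip, integral_prod G hG]

theorem setIntegral_strip_mono_of_intervalIntegral_le {F G : ℝ × ℝ → ℝ}
    (hF : IntegrableOn F strip) (hG : IntegrableOn G strip)
    (h : ∀ x, ∫ y in (0 : ℝ)..1, F (x, y) ≤ ∫ y in (0 : ℝ)..1, G (x, y)) :
    ∫ p in strip, F p ≤ ∫ p in strip, G p := by
  rw [setIntegral_strip hF, setIntegral_strip hG]
  exact integral_mono (integrable_intervalIntegral_of_integrableOn_strip hF)
    (integrable_intervalIntegral_of_integrableOn_strip hG) h

theorem intervalIntegral_eq_zero_of_integrableOn_strip {g G : ℝ × ℝ → ℝ} (hg : Continuous g)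
    (hGc : Continuous G) (hG : IntegrableOn G strip) (hgG : ∀ p, g p ^ 2 ≤ G p)
    (hconst : ∀ a b, ∫ y in (0 : ℝ)..1, g (a, y) = ∫ y in (0 : ℝ)..1, g (b, y)) (x : ℝ) :
    ∫ y in (0 : ℝ)..1, g (x, y) = 0 := by
  refine eq_zero_of_sq_le_of_integrable Real.volume_univ
    (integrable_intervalIntegral_of_integrableOn_strip hG) fun x' => ?_
  have hslice : ∀ {k : ℝ × ℝ → ℝ}, Continuous k →
      IntervalIntegrable (fun y => k (x', y)) volume 0 1 :=
    fun hk => (hk.comp (Continuous.prodMk_right x')).intervalIntegrable _ _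
  rw [hconst x x']
  calc (∫ y in (0 : ℝ)..1, g (x', y)) ^ 2 ≤ (1 - 0) * ∫ y in (0 : ℝ)..1, g (x', y) ^ 2 :=
        sq_intervalIntegral_le_mul zero_le_one (hslice hg) (hslice (hg.pow 2))
    _ ≤ ∫ y in (0 : ℝ)..1, G (x', y) := by
        rw [sub_zero, one_mul]
        exact intervalIntegral.integral_mono_on zero_le_one (hslice (hg.pow 2)) (hslice hGc)
          fun y _ => hgG _

/-- Poincaré inequality on the strip `Ω = ℝ×(0,1)`: there is `C > 0` with
`‖u‖_{L²(Ω)} ≤ C ‖∂_y u‖_{L²(Ω)}` for all divergence-free `u ∈ H¹(Ω;ℝ²)` with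
`u²(x,0)=u²(x,1)=0`. -/
theorem poincare_strip :
    ∃ C > 0, ∀ (u : ℝ × ℝ → ℝ × ℝ),
      ContDiff ℝ 1 u →
      (∀ p : ℝ × ℝ, dx (fun q => (u q).1) p + dy (fun q => (u q).2) p = 0) →
      (∀ x : ℝ, (u (x, 0)).2 = 0 ∧ (u (x, 1)).2 = 0) →
      IntegrableOn (fun p => ‖u p‖ ^ 2) strip →
      IntegrableOn (fun p => ‖fderiv ℝ u p (0, 1)‖ ^ 2) strip →
      (∫ p in strip, ‖u p‖ ^ 2) ^ ((1 : ℝ) / 2) ≤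
        C * (∫ p in strip, ‖fderiv ℝ u p (0, 1)‖ ^ 2) ^ ((1 : ℝ) / 2) := by
  refine ⟨2 ^ ((1 : ℝ) / 2), by positivity, fun u hu hdiv hbc hIu hId => ?_⟩
  set w := fun p => fderiv ℝ u p (0, 1)
  have hu₁ : ContDiff ℝ 1 fun q => (u q).1 := contDiff_fst.comp hu
  have hu₂ : ContDiff ℝ 1 fun q => (u q).2 := contDiff_snd.comp hu
  have hmu : AEStronglyMeasurable u (volume.restrict strip) := hu.continuous.aestronglyMeasurable
  have hmw : AEStronglyMeasurable w (volume.restrict strip) :=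
    ((hu.continuous_fderiv one_ne_zero).clm_apply continuous_const).aestronglyMeasurable
  have hflux : ∀ x, ∫ y in (0 : ℝ)..1, (u (x, y)).1 = 0 :=
    intervalIntegral_eq_zero_of_integrableOn_strip (G := fun p => ‖u p‖ ^ 2) hu₁.continuous
      (hu.continuous.norm.pow 2) hIu (fun p => fst_sq_le_sq_norm (u p))
      (intervalIntegral_eq_of_dx_add_dy_eq_zero hu₁ hu₂ hdiv (fun x => (hbc x).1)
        (fun x => (hbc x).2))
  have hslice : ∀ x, ∫ y in (0 : ℝ)..1, ((u (x, y)).1 ^ 2 + (u (x, y)).2 ^ 2) ≤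
      ∫ y in (0 : ℝ)..1, ((w (x, y)).1 ^ 2 + (w (x, y)).2 ^ 2) := fun x => by
    have := intervalIntegral_sq_add_sq_le_dy hu₁ hu₂ (hflux x) (hbc x).1
    simpa only [dy_fst (hu.differentiable one_ne_zero _),
      dy_snd (hu.differentiable one_ne_zero _)] using this
  have key : ∫ p in strip, ‖u p‖ ^ 2 ≤ 2 * ∫ p in strip, ‖w p‖ ^ 2 :=
    (integral_sq_norm_le_integral_fst_sq_add_snd_sq hmu hIu).trans <|
      (setIntegral_strip_mono_of_intervalIntegral_le (hIu.fst_sq_add_snd_sq hmu)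
        (hId.fst_sq_add_snd_sq hmw) hslice).trans <|
      integral_fst_sq_add_snd_sq_le_two_mul hmw hId
  calc (∫ p in strip, ‖u p‖ ^ 2) ^ ((1 : ℝ) / 2)
      ≤ (2 * ∫ p in strip, ‖w p‖ ^ 2) ^ ((1 : ℝ) / 2) :=
        Real.rpow_le_rpow (integral_nonneg fun _ => by positivity) key (by norm_num)
    _ = 2 ^ ((1 : ℝ) / 2) * (∫ p in strip, ‖w p‖ ^ 2) ^ ((1 : ℝ) / 2) :=
        Real.mul_rpow zero_le_two (integral_nonneg fun _ => by positivity)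
end
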